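/- arXiv:1702.01803 — 2 statements merged into one kernel-verified Lean document; each statement's English description precedes it below -/
import Mathlib

section
/- Greedy selection for submodular monotone revenue: if R is a monotone submodular set function on subsets of a finite set B with R(∅) = 0, then the greedy algorithm that iteratively adds the element with maximum marginal gain produces, after k steps, a set G_k with R(G_k) ≥ (1 − (1 − 1/k)^k)·max_{|S| ≤ k} R(S) ≥ (1 − 1/e)·max_{|S| ≤ k} R(S). -/
/-! Submodularity bounds the gap `R S - R (G j)` by the `|S| ≤ k` marginal gains of the elements
of `S` at `G j`, each at most the greedy gain `R (G (j+1)) - R (G j)`. Hence each greedy step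
shrinks the gap by a factor `1 - 1/k`, and after `k` steps it is at most
`(1 - 1/k)^k R S ≤ e⁻¹ R S`. -/

open Finset

section Submodular

variable {B : Type*} [DecidableEq B] {R : Finset B → ℝ}

lemma sub_le_sum_marginal
    (hsub : ∀ S T : Finset B, S ⊆ T → ∀ i ∉ T,
      R (insert i T) - R T ≤ R (insert i S) - R S)
    (A T : Finset B) : R (A ∪ T) - R A ≤ ∑ i ∈ T, (R (insert i A) - R A) := by
  induction T using Finset.induction_on with
  | empty => simp
  | @insert i T hiT ih =>
    rw [sum_insert hiT, union_insert]
    by_cases hiA : i ∈ A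
    · rw [insert_eq_of_mem (mem_union_left T hiA), insert_eq_of_mem hiA, sub_self, zero_add]
      exact ih
    · have := hsub A (A ∪ T) subset_union_left i (by simp [hiA, hiT])
      linarith

lemma le_add_mul_of_forall_insert_le
    (hmono : ∀ S T : Finset B, S ⊆ T → R S ≤ R T)
    (hsub : ∀ S T : Finset B, S ⊆ T → ∀ i ∉ T,
      R (insert i T) - R T ≤ R (insert i S) - R S)
    {A A' S : Finset B} {k : ℕ} (hS : S.card ≤ k) (hAA' : A ⊆ A')
    (hbest : ∀ i, R (insert i A) ≤ R A') :
    R S ≤ R A + k * (R A' - R A) := by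
  have hgain : 0 ≤ R A' - R A := sub_nonneg.2 (hmono A A' hAA')
  calc R S ≤ R (A ∪ S) := hmono S _ subset_union_right
    _ ≤ R A + ∑ i ∈ S, (R (insert i A) - R A) := by linarith [sub_le_sum_marginal hsub A S]
    _ ≤ R A + ∑ _i ∈ S, (R A' - R A) := by gcongr with i; exact hbest i
    _ = R A + S.card * (R A' - R A) := by rw [sum_const, nsmul_eq_mul]
    _ ≤ R A + k * (R A' - R A) := by gcongr

lemma sub_le_one_sub_div_mul_sub_of_forall_insert_le
    (hmono : ∀ S T : Finset B, S ⊆ T → R S ≤ R T)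
    (hsub : ∀ S T : Finset B, S ⊆ T → ∀ i ∉ T,
      R (insert i T) - R T ≤ R (insert i S) - R S)
    {A A' S : Finset B} {k : ℕ} (hk : 0 < k) (hS : S.card ≤ k) (hAA' : A ⊆ A')
    (hbest : ∀ i, R (insert i A) ≤ R A') :
    R S - R A' ≤ (1 - 1 / (k : ℝ)) * (R S - R A) := by
  have hcover := le_add_mul_of_forall_insert_le hmono hsub hS hAA' hbest
  have hgap : (R S - R A) / k ≤ R A' - R A := by
    rw [div_le_iff₀ (by exact_mod_cast hk)]
    linarith
  linarith [show (1 - 1 / (k : ℝ)) * (R S - R A) = R S - R A - (R S - R A) / k by ring]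

lemma greedy_gap_le_pow
    (hmono : ∀ S T : Finset B, S ⊆ T → R S ≤ R T)
    (hsub : ∀ S T : Finset B, S ⊆ T → ∀ i ∉ T,
      R (insert i T) - R T ≤ R (insert i S) - R S)
    {G : ℕ → Finset B}
    (hGstep : ∀ j : ℕ, ∃ i : B, G (j + 1) = insert i (G j) ∧
      ∀ i' : B, R (insert i' (G j)) ≤ R (insert i (G j)))
    {S : Finset B} {k : ℕ} (hk : 0 < k) (hS : S.card ≤ k) (n : ℕ) :
    R S - R (G n) ≤ (1 - 1 / (k : ℝ)) ^ n * (R S - R (G 0)) := by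
  have hratio : 0 ≤ 1 - 1 / (k : ℝ) :=
    sub_nonneg.2 (div_le_one_of_le₀ (Nat.one_le_cast.2 hk) k.cast_nonneg)
  refine le_geom (u := fun j ↦ R S - R (G j)) hratio n fun j _ ↦ ?_
  obtain ⟨i, hGj, hbest⟩ := hGstep j
  rw [hGj]
  exact sub_le_one_sub_div_mul_sub_of_forall_insert_le hmono hsub hk hS (subset_insert i _) hbest

end Submodular

theorem greedy_submodular_guarantee_general {B : Type*} [DecidableEq B]
    (R : Finset B → ℝ)
    (hmono : ∀ S T : Finset B, S ⊆ T → R S ≤ R T)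
    (hsub : ∀ S T : Finset B, S ⊆ T → ∀ i ∉ T,
      R (insert i T) - R T ≤ R (insert i S) - R S)
    (hempty : R ∅ = 0)
    (G : ℕ → Finset B)
    (hG0 : G 0 = ∅)
    (hGstep : ∀ j : ℕ, ∃ i : B, G (j + 1) = insert i (G j) ∧
      ∀ i' : B, R (insert i' (G j)) ≤ R (insert i (G j))) :
    ∀ k : ℕ, 1 ≤ k → ∀ S : Finset B, S.card ≤ k →
      (1 - (1 - 1 / (k : ℝ)) ^ k) * R S ≤ R (G k) ∧
      (1 - 1 / Real.exp 1) * R S ≤ R (G k) := by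
  intro k hk S hS
  have hgap := greedy_gap_le_pow hmono hsub hGstep hk hS k
  rw [hG0, hempty, sub_zero] at hgap
  have hRS : 0 ≤ R S := hempty ▸ hmono ∅ S (empty_subset S)
  have hexp : (1 - 1 / (k : ℝ)) ^ k ≤ 1 / Real.exp 1 := by
    simpa [Real.exp_neg] using
      Real.one_sub_div_pow_le_exp_neg (n := k) (t := 1) (by exact_mod_cast hk)
  refine ⟨by linarith, ?_⟩
  calc (1 - 1 / Real.exp 1) * R S ≤ (1 - (1 - 1 / (k : ℝ)) ^ k) * R S := by gcongr
    _ ≤ R (G k) := by linarith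

/-- Greedy guarantee for monotone submodular set functions (Nemhauser–Wolsey–Fisher):
if `R` is monotone and submodular with `R ∅ = 0`, and `G` is a greedy sequence
(`G 0 = ∅`, and `G (j+1)` adds an element of maximum marginal gain), then for every
`k ≥ 1` and every `S` with `|S| ≤ k`,
`R (G k) ≥ (1 − (1 − 1/k)^k) · R S ≥ (1 − 1/e) · R S`. -/
theorem greedy_submodular_guarantee {B : Type*} [Fintype B] [DecidableEq B]
    (R : Finset B → ℝ)
    (hmono : ∀ S T : Finset B, S ⊆ T → R S ≤ R T)
    (hsub : ∀ S T : Finset B, S ⊆ T → ∀ i ∉ T,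
      R (insert i T) - R T ≤ R (insert i S) - R S)
    (hempty : R ∅ = 0)
    (G : ℕ → Finset B)
    (hG0 : G 0 = ∅)
    (hGstep : ∀ j : ℕ, ∃ i : B, G (j + 1) = insert i (G j) ∧
      ∀ i' : B, R (insert i' (G j)) ≤ R (insert i (G j))) :
    ∀ k : ℕ, 1 ≤ k → ∀ S : Finset B, S.card ≤ k →
      (1 - (1 - 1 / (k : ℝ)) ^ k) * R S ≤ R (G k) ∧
      (1 - 1 / Real.exp 1) * R S ≤ R (G k) :=
  greedy_submodular_guarantee_general R hmono hsub hempty G hG0 hGstep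
end

section
/- In the 3-dimensional-matching reduction: given disjoint finite sets X, Z and Y with edges E ⊆ (X ∪ Z) × Y, construct an auction instance where each bidder b_x (x ∈ X ∪ Z) has quota 1 and bids 1 on item i_y iff (x,y) ∈ E (else 0), with zero reserve and second-price rules. Then the revenue of a feasible assignment (each bidder assigned to at most one item) equals the number of items receiving at least two bids of 1 from their assigned bidders. In particular, assigning two connected bidders to an item yields revenue 1 from that item, and the maximum total revenue over quota-feasible assignments is at least the size of any matching in which each matched item receives two adjacent bidders. -/
open Finset

open Classical in
/-- The second-highest value in a multiset of reals (0 if the multiset has at most one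
element): sort ascending and take the next-to-last entry. -/
noncomputable def secondHighest (s : Multiset ℝ) : ℝ :=
  if Multiset.card s ≤ 1 then 0 else (s.sort (· ≤ ·)).getD (Multiset.card s - 2) 0

/-- In the 3-dimensional-matching reduction, bidder `v` bids 1 on item `y` iff `(v, y)`
is an edge, else 0. -/
noncomputable def edgeBid {V Y : Type*} (Ed : V → Y → Prop) [∀ v y, Decidable (Ed v y)]
    (v : V) (y : Y) : ℝ :=
  if Ed v y then 1 else 0

/-- Second-price (zero-reserve) revenue of item `y` under the quota-1 assignment
`f : V → Option Y`: the second-highest bid among the bidders assigned to `y`. -/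
noncomputable def itemRevenue {V Y : Type*} [Fintype V] [DecidableEq Y]
    (Ed : V → Y → Prop) [∀ v y, Decidable (Ed v y)] (f : V → Option Y) (y : Y) : ℝ :=
  secondHighest (((Finset.univ.filter (fun v => f v = some y)).1).map (fun v => edgeBid Ed v y))

/-! All bids are 0 or 1, so the sorted bid list of an item is a block of zeros followed by a
block of ones, and its next-to-last entry is 1 exactly when at least two of the bidders assigned
to the item are adjacent to it. For the matching, disjointness of the bidder pairs makes
"send both bidders of a matched item to that item" a well-defined quota-1 assignment, under
which every matched item earns 1. -/

theorem Multiset.sort_replicate_add_replicate {α : Type*} [LinearOrder α] {x y : α} (hxy : x ≤ y)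
    (a b : ℕ) :
    (replicate a x + replicate b y).sort (· ≤ ·) = List.replicate a x ++ List.replicate b y := by
  refine List.Perm.eq_of_pairwise' (pairwise_sort _ _) ?_
    (coe_eq_coe.1 (by rw [sort_eq, ← coe_add, coe_replicate, coe_replicate]))
  simp only [List.pairwise_append, List.pairwise_replicate, List.mem_replicate]
  grind

theorem Multiset.eq_replicate_zero_add_replicate_one {s : Multiset ℝ}
    (hs : ∀ x ∈ s, x = 0 ∨ x = 1) : s = replicate (s.count 0) 0 + replicate (s.count 1) 1 := by
  ext x
  rw [count_add, count_replicate, count_replicate]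
  by_cases h0 : x = 0
  · simp [h0]
  by_cases h1 : x = 1
  · simp [h1]
  have hx : x ∉ s := fun hx => (hs x hx).elim h0 h1
  simp [Ne.symm h0, Ne.symm h1, count_eq_zero.2 hx]

theorem secondHighest_replicate_zero_add_replicate_one (a b : ℕ) :
    secondHighest (Multiset.replicate a 0 + Multiset.replicate b 1) = if 2 ≤ b then 1 else 0 := by
  unfold secondHighest
  rw [Multiset.sort_replicate_add_replicate zero_le_one]
  simp only [Multiset.card_add, Multiset.card_replicate]
  split_ifs with hcard hb hb
  · omega
  · rfl
  · rw [List.getD_append_right _ _ _ _ (by simp; omega)]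
    simp [show a + b - 2 - a < b by omega]
  · rw [List.getD_append _ _ _ _ (by simp; omega)]
    simp

theorem secondHighest_eq_ite_of_forall_mem_zero_or_one {s : Multiset ℝ}
    (hs : ∀ x ∈ s, x = 0 ∨ x = 1) : secondHighest s = if 2 ≤ s.count 1 then 1 else 0 := by
  conv_lhs => rw [Multiset.eq_replicate_zero_add_replicate_one hs]
  exact secondHighest_replicate_zero_add_replicate_one _ _

section Revenue

variable {V Y : Type*} [Fintype V] [DecidableEq Y] (Ed : V → Y → Prop) [∀ v y, Decidable (Ed v y)]

theorem itemRevenue_eq_ite (f : V → Option Y) (y : Y) :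
    itemRevenue Ed f y =
      if 2 ≤ #{v | f v = some y ∧ Ed v y} then 1 else 0 := by
  have hbids : ∀ x ∈ (({v | f v = some y} : Finset V).1.map (edgeBid Ed · y)), x = 0 ∨ x = 1 := by
    simp only [Multiset.mem_map]
    rintro _ ⟨v, -, rfl⟩
    unfold edgeBid
    split_ifs <;> simp
  have hcount : (({v | f v = some y} : Finset V).1.map (edgeBid Ed · y)).count 1 =
      #{v | f v = some y ∧ Ed v y} := by
    rw [Multiset.count_map, ← filter_val, filter_filter, card_def]
    congr! 4 with v
    unfold edgeBid
    split_ifs <;> simp_all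
  rw [itemRevenue, secondHighest_eq_ite_of_forall_mem_zero_or_one hbids, hcount]

theorem sum_itemRevenue_eq_card [Fintype Y] (f : V → Option Y) :
    ∑ y, itemRevenue Ed f y = (#{y | 2 ≤ #{v | f v = some y ∧ Ed v y}} : ℝ) := by
  simp only [itemRevenue_eq_ite, sum_boole]

end Revenue

theorem exists_forall_mem_eq_some_of_pairwiseDisjoint {V Y : Type*} {M : Set Y}
    {S : Y → Finset V} (hM : M.PairwiseDisjoint S) :
    ∃ f : V → Option Y, ∀ y ∈ M, ∀ v ∈ S y, f v = some y := by
  classical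
  refine ⟨fun v => if h : ∃ y ∈ M, v ∈ S y then some h.choose else none, fun y hy v hv => ?_⟩
  have h : ∃ y ∈ M, v ∈ S y := ⟨y, hy, hv⟩
  dsimp only
  rw [dif_pos h]
  exact congrArg some (hM.elim_finset h.choose_spec.1 hy v h.choose_spec.2 hv)

/-- 3-dimensional-matching reduction: with 0/1 bids given by the edge relation, quota 1,
zero reserve and second-price rules, (i) the total revenue of any feasible assignment `f`
equals the number of items receiving at least two bids of 1 from their assigned bidders,
and (ii) given a matching `M` of items in which each matched item `y` receives two
distinct adjacent bidders `g₁ y, g₂ y` (all distinct across matched items), some feasible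
assignment attains total revenue at least `|M|`. -/
theorem three_dim_matching_reduction {V Y : Type*} [Fintype V] [Fintype Y]
    [DecidableEq V] [DecidableEq Y]
    (Ed : V → Y → Prop) [∀ v y, Decidable (Ed v y)]
    (M : Finset Y) (g₁ g₂ : Y → V)
    (hadj : ∀ y ∈ M, g₁ y ≠ g₂ y ∧ Ed (g₁ y) y ∧ Ed (g₂ y) y)
    (hdisj : ∀ y ∈ M, ∀ y' ∈ M, y ≠ y' →
      Disjoint ({g₁ y, g₂ y} : Finset V) ({g₁ y', g₂ y'} : Finset V)) :
    (∀ f : V → Option Y,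
      ∑ y, itemRevenue Ed f y =
        ((Finset.univ.filter (fun y : Y =>
          2 ≤ (Finset.univ.filter (fun v : V => f v = some y ∧ Ed v y)).card)).card : ℝ)) ∧
    (∃ f : V → Option Y, (M.card : ℝ) ≤ ∑ y, itemRevenue Ed f y) := by
  refine ⟨sum_itemRevenue_eq_card Ed, ?_⟩
  obtain ⟨f, hf⟩ := exists_forall_mem_eq_some_of_pairwiseDisjoint
    (M := (M : Set Y)) (S := fun y => {g₁ y, g₂ y}) hdisj
  refine ⟨f, ?_⟩
  have hM : M ⊆ ({y | 2 ≤ #{v | f v = some y ∧ Ed v y}} : Finset Y) := fun y hy => by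
    obtain ⟨hne, hE₁, hE₂⟩ := hadj y hy
    refine mem_filter.2 ⟨mem_univ y, one_lt_card.2 ⟨g₁ y, ?_, g₂ y, ?_, hne⟩⟩ <;>
      simp [hf y hy, hE₁, hE₂]
  rw [sum_itemRevenue_eq_card]
  exact_mod_cast card_le_card hM
end
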